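/- Let n ≥ 1, let A ⊆ C_b(T^n × ℝ^n, ℂ) be the sup-norm closure of S_R(T*T^n), and let Φ₀ : T^n × ℝ^n → T^n × ℝ^n be the free time-1 evolution Φ₀(q,p) := (p +ᵥ q, p). Then for every f ∈ A the pullback f ∘ Φ₀ again belongs to A; i.e. free classical time evolution preserves the commutative resolvent algebra on the torus. -/

import Mathlib

noncomputable section

/-- Phase-space functions on `T*Tⁿ ≅ Tⁿ × ℝⁿ` are encoded as `ℤⁿ`-periodic (in the first
variable) functions on the cover `ℝⁿ × ℝⁿ`, with `ℝⁿ = EuclideanSpace ℝ (Fin n)`.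
`SRgen n` is the set of generators of `S_R(T*Tⁿ)`:
`(q,p) ↦ e_b(q)·e^{iξ·p}·h(P_U(p))` with `b ∈ ℤⁿ`, `U ⊆ ℝⁿ` a linear subspace, `ξ ⊥ U`,
and `h` a Schwartz function. -/
def SRgen (n : ℕ) : Set (EuclideanSpace ℝ (Fin n) × EuclideanSpace ℝ (Fin n) → ℂ) :=
  {f | ∃ (b : Fin n → ℤ) (U : Submodule ℝ (EuclideanSpace ℝ (Fin n)))
      (ξ : EuclideanSpace ℝ (Fin n)) (h : SchwartzMap (EuclideanSpace ℝ (Fin n)) ℂ),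
    (∀ u ∈ U, inner ℝ ξ u = (0 : ℝ)) ∧
    ∀ xp : EuclideanSpace ℝ (Fin n) × EuclideanSpace ℝ (Fin n),
      f xp = Complex.exp (2 * Real.pi * Complex.I * ∑ i, (b i : ℂ) * (xp.1 i : ℂ)) *
        Complex.exp (Complex.I * ((inner ℝ ξ xp.2 : ℝ) : ℂ)) *
        h (U.orthogonalProjection xp.2)}

/-- Membership in the sup-norm closure `A = C_R(T*Tⁿ)` of the linear span of the
generators `SRgen n` (i.e. of `S_R(T*Tⁿ)`). -/
def memA (n : ℕ) (f : EuclideanSpace ℝ (Fin n) × EuclideanSpace ℝ (Fin n) → ℂ) : Prop :=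
  ∀ ε : ℝ, 0 < ε → ∃ g ∈ Submodule.span ℂ (SRgen n), ∀ xp, ‖f xp - g xp‖ ≤ ε

/-!
Free flow for time `t` turns `e_b(q)` into `e_b(q) · e^{i⟪2πtb, p⟫}`. Split `2πtb = w + (2πtb - w)`
with `w = P_U(2πtb)`: the part orthogonal to `U` is absorbed into `ξ`, and since
`⟪w, p⟫ = ⟪w, P_U p⟫` the character `e^{i⟪w, ·⟫}` — of temperate growth — is absorbed into the
Schwartz function `h`. So the flow maps generators to generators, hence preserves their span and its
uniform closure.
-/

open Complex Real

lemma iteratedDeriv_cexp_I_mul (k : ℕ) :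
    iteratedDeriv k (fun t : ℝ => cexp (I * t)) = fun t : ℝ => I ^ k * cexp (I * t) := by
  induction k with
  | zero => simp
  | succ k ih =>
    rw [iteratedDeriv_succ, ih]
    funext t
    have hd : HasDerivAt (fun t : ℝ => cexp (I * t)) (cexp (I * t) * I) t := by
      simpa using ((ofRealCLM.hasDerivAt (x := t)).const_mul I).cexp
    rw [(hd.const_mul (I ^ k)).deriv]
    ring

lemma hasTemperateGrowth_cexp_I_mul : (fun t : ℝ => cexp (I * t)).HasTemperateGrowth := by
  refine ⟨(contDiff_const.mul ofRealCLM.contDiff).cexp, fun k => ⟨0, 1, fun t => ?_⟩⟩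
  rw [norm_iteratedFDeriv_eq_norm_iteratedDeriv, iteratedDeriv_cexp_I_mul]
  simp [norm_exp]

lemma hasTemperateGrowth_cexp_I_mul_inner {E : Type*} [NormedAddCommGroup E]
    [InnerProductSpace ℝ E] (w : E) :
    (fun x : E => cexp (I * (inner ℝ w x : ℝ))).HasTemperateGrowth :=
  hasTemperateGrowth_cexp_I_mul.comp (Function.hasTemperateGrowth_inner_right w)

lemma two_pi_mul_sum_eq_inner {n : ℕ} (b : Fin n → ℤ) (x : EuclideanSpace ℝ (Fin n)) :
    2 * (π : ℂ) * ∑ i, (b i : ℂ) * (x i : ℂ) =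
      ((inner ℝ (WithLp.toLp 2 fun i => 2 * π * (b i : ℝ)) x : ℝ) : ℂ) := by
  simp only [PiLp.inner_apply, Finset.mul_sum]
  push_cast
  exact Finset.sum_congr rfl fun i _ => by simp; ring

lemma inner_orthogonalProjectionOnto_eq_of_mem {E : Type*} [NormedAddCommGroup E]
    [InnerProductSpace ℝ E] {U : Submodule ℝ E} [U.HasOrthogonalProjection] {w : E} (hw : w ∈ U)
    (x : E) : inner ℝ w (U.orthogonalProjectionOnto x : E) = inner ℝ w x := by
  rw [← U.starProjection_apply, ← U.inner_starProjection_left_eq_right,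
    U.starProjection_eq_self_iff.mpr hw]

lemma comp_freeFlow_mem_SRgen {n : ℕ} (t : ℝ)
    {g : EuclideanSpace ℝ (Fin n) × EuclideanSpace ℝ (Fin n) → ℂ} (hg : g ∈ SRgen n) :
    (fun xp : EuclideanSpace ℝ (Fin n) × EuclideanSpace ℝ (Fin n) =>
      g (xp.1 + t • xp.2, xp.2)) ∈ SRgen n := by
  obtain ⟨b, U, ξ, h, hξ, hg⟩ := hg
  set v : EuclideanSpace ℝ (Fin n) := WithLp.toLp 2 fun i => 2 * π * (b i : ℝ)
  set w := U.starProjection (t • v)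
  have hw : w ∈ U := U.starProjection_apply_mem (t • v)
  refine ⟨b, U, ξ + (t • v - w),
    SchwartzMap.smulLeftCLM ℂ (fun x => cexp (I * (inner ℝ w x : ℝ))) h, fun u hu => ?_,
    fun xp => ?_⟩
  · rw [inner_add_left, hξ u hu, zero_add]
    exact Submodule.inner_left_of_mem_orthogonal hu (U.sub_starProjection_mem_orthogonal _)
  · beta_reduce
    rw [hg, SchwartzMap.smulLeftCLM_apply_apply (hasTemperateGrowth_cexp_I_mul_inner w),
      smul_eq_mul, inner_orthogonalProjectionOnto_eq_of_mem hw]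
    have hexponent :
        2 * π * I * ∑ i, (b i : ℂ) * ((xp.1 + t • xp.2) i : ℂ) + I * (inner ℝ ξ xp.2 : ℝ) =
        2 * π * I * ∑ i, (b i : ℂ) * (xp.1 i : ℂ) + I * (inner ℝ (ξ + (t • v - w)) xp.2 : ℝ) +
          I * (inner ℝ w xp.2 : ℝ) := by
      have hq := two_pi_mul_sum_eq_inner b xp.1
      have hqp := two_pi_mul_sum_eq_inner b (xp.1 + t • xp.2)
      simp only [inner_add_left, inner_add_right, inner_sub_left, real_inner_smul_left,
        real_inner_smul_right] at hqp ⊢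
      push_cast at hq hqp ⊢
      linear_combination I * hqp - I * hq
    rw [← Complex.exp_add, hexponent, Complex.exp_add, Complex.exp_add]
    ring

lemma memA_comp {n : ℕ}
    {φ : EuclideanSpace ℝ (Fin n) × EuclideanSpace ℝ (Fin n) →
      EuclideanSpace ℝ (Fin n) × EuclideanSpace ℝ (Fin n)}
    (hφ : ∀ g ∈ SRgen n, (fun xp => g (φ xp)) ∈ SRgen n)
    {f : EuclideanSpace ℝ (Fin n) × EuclideanSpace ℝ (Fin n) → ℂ} (hf : memA n f) :
    memA n (fun xp => f (φ xp)) := by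
  intro ε hε
  obtain ⟨g, hg, hfg⟩ := hf ε hε
  have hspan : (Submodule.span ℂ (SRgen n)).map (LinearMap.funLeft ℂ ℂ φ) ≤
      Submodule.span ℂ (SRgen n) :=
    Submodule.map_span_le _ _ _ |>.mpr fun g hg => Submodule.subset_span (hφ g hg)
  exact ⟨g ∘ φ, hspan ⟨g, hg, rfl⟩, fun xp => hfg (φ xp)⟩

theorem stmt10 (n : ℕ)
    (f : EuclideanSpace ℝ (Fin n) × EuclideanSpace ℝ (Fin n) → ℂ) (hf : memA n f) :
    memA n (fun xp => f (xp.1 + xp.2, xp.2)) :=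
  memA_comp (φ := fun xp => (xp.1 + xp.2, xp.2))
    (fun g hg => by simpa using comp_freeFlow_mem_SRgen 1 hg) hf

end
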